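/- Let N ∈ {2,3}, α = 4 − N, m₁, m₂ > 0, and ω ∈ ℝ with ω² < min{m₁², m₂²/4}. Let 𝛗_ω = (φ₁,φ₂) be a ground-state pair and 𝛙_ω = (iωφ₁, 2iωφ₂). Let T ∈ (0,∞], and for each t ∈ [0,T) let 𝐮(t) be an admissible pair and 𝐯(t) a pair of square-integrable functions. Assume: the functions t ↦ P_ω(𝐮(t)) and t ↦ M_ω(𝐮(t)) are continuous on [0,T); E(𝐮(t),𝐯(t)) − ω·Q(𝐮(t),𝐯(t)) = E(𝐮(0),𝐯(0)) − ω·Q(𝐮(0),𝐯(0)) for all t ∈ [0,T); E(𝐮(0),𝐯(0)) − ω·Q(𝐮(0),𝐯(0)) < E(𝛗_ω,𝛙_ω) − ω·Q(𝛗_ω,𝛙_ω); and P_ω(𝐮(0)) < 0. Then P_ω(𝐮(t)) < 0 for all t ∈ [0,T). -/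

import Mathlib

open MeasureTheory Complex
open scoped ENNReal

noncomputable section

/-- The spatial domain `ℝ^N`. -/
abbrev Sp (N : ℕ) := EuclideanSpace ℝ (Fin N)

/-- Square of the `L²` norm: `‖u‖_{L²}²`. -/
def nsq {N : ℕ} (u : Sp N → ℂ) : ℝ := ∫ x, ‖u x‖ ^ 2

/-- Square of the `L²` norm of the gradient: `‖∇u‖_{L²}²`. -/
def gsq {N : ℕ} (u : Sp N → ℂ) : ℝ := ∫ x, ‖fderiv ℝ u x‖ ^ 2

/-- An admissible pair: differentiable components, with `u_j`, `|∇u_j|`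
square-integrable and `|u₁|²|u₂|` integrable. -/
def Admissible {N : ℕ} (u : (Sp N → ℂ) × (Sp N → ℂ)) : Prop :=
  Differentiable ℝ u.1 ∧ Differentiable ℝ u.2 ∧
  MemLp u.1 2 volume ∧ MemLp u.2 2 volume ∧
  Integrable (fun x => ‖fderiv ℝ u.1 x‖ ^ 2) ∧
  Integrable (fun x => ‖fderiv ℝ u.2 x‖ ^ 2) ∧
  Integrable (fun x => ‖u.1 x‖ ^ 2 * ‖u.2 x‖)

/-- A pair of square-integrable functions. -/
def SqInt {N : ℕ} (v : (Sp N → ℂ) × (Sp N → ℂ)) : Prop :=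
  MemLp v.1 2 volume ∧ MemLp v.2 2 volume

/-- The interaction term `G(𝐮) = Re ∫ u₁² conj u₂`. -/
def Gfun {N : ℕ} (u : (Sp N → ℂ) × (Sp N → ℂ)) : ℝ :=
  (∫ x, (u.1 x) ^ 2 * starRingEnd ℂ (u.2 x)).re

/-- `L(𝐮) = -(1/2)(‖∇u₁‖² + ‖∇u₂‖²) + G(𝐮)`. -/
def Lfun {N : ℕ} (u : (Sp N → ℂ) × (Sp N → ℂ)) : ℝ :=
  -(1/2) * (gsq u.1 + gsq u.2) + Gfun u

/-- `M(𝐮) = (1/2)(m₁²‖u₁‖² + m₂²‖u₂‖²)`. -/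
def Mfun {N : ℕ} (m₁ m₂ : ℝ) (u : (Sp N → ℂ) × (Sp N → ℂ)) : ℝ :=
  (1/2) * (m₁ ^ 2 * nsq u.1 + m₂ ^ 2 * nsq u.2)

/-- `M_ω(𝐮) = ((m₁²-ω²)/2)‖u₁‖² + ((m₂²-4ω²)/2)‖u₂‖²`. -/
def Mom {N : ℕ} (m₁ m₂ ω : ℝ) (u : (Sp N → ℂ) × (Sp N → ℂ)) : ℝ :=
  (m₁ ^ 2 - ω ^ 2) / 2 * nsq u.1 + (m₂ ^ 2 - 4 * ω ^ 2) / 2 * nsq u.2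

/-- `J_ω(𝐮) = M_ω(𝐮) - L(𝐮)`. -/
def Jom {N : ℕ} (m₁ m₂ ω : ℝ) (u : (Sp N → ℂ) × (Sp N → ℂ)) : ℝ :=
  Mom m₁ m₂ ω u - Lfun u

/-- The Nehari functional `K_ω(𝐮)`. -/
def Kom {N : ℕ} (m₁ m₂ ω : ℝ) (u : (Sp N → ℂ) × (Sp N → ℂ)) : ℝ :=
  2 * Mom m₁ m₂ ω u + gsq u.1 + gsq u.2 - 3 * Gfun u

/-- `P_ω(𝐮) = α M_ω(𝐮) - (α+2) L(𝐮)` with `α = 4 - N`. -/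
def Pom {N : ℕ} (m₁ m₂ ω : ℝ) (u : (Sp N → ℂ) × (Sp N → ℂ)) : ℝ :=
  (4 - (N : ℝ)) * Mom m₁ m₂ ω u - ((4 - (N : ℝ)) + 2) * Lfun u

/-- `K(𝐯) = (1/2)(‖v₁‖² + ‖v₂‖²)`. -/
def Kfun {N : ℕ} (v : (Sp N → ℂ) × (Sp N → ℂ)) : ℝ :=
  (1/2) * (nsq v.1 + nsq v.2)

/-- The energy `E(𝐮,𝐯) = K(𝐯) + M(𝐮) - L(𝐮)`. -/
def Efun {N : ℕ} (m₁ m₂ : ℝ) (u v : (Sp N → ℂ) × (Sp N → ℂ)) : ℝ :=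
  Kfun v + Mfun m₁ m₂ u - Lfun u

/-- The charge `Q(𝐮,𝐯) = (v₁, i u₁)_{L²} + 2 (v₂, i u₂)_{L²}`. -/
def Qfun {N : ℕ} (u v : (Sp N → ℂ) × (Sp N → ℂ)) : ℝ :=
  (∫ x, v.1 x * starRingEnd ℂ (Complex.I * u.1 x)).re +
    2 * (∫ x, v.2 x * starRingEnd ℂ (Complex.I * u.2 x)).re

/-- `H(𝐮,𝐯) = -α K(𝐯) + α M(𝐮) - (α+2) L(𝐮)` with `α = 4 - N`. -/
def Hfun {N : ℕ} (m₁ m₂ : ℝ) (u v : (Sp N → ℂ) × (Sp N → ℂ)) : ℝ :=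
  -(4 - (N : ℝ)) * Kfun v + (4 - (N : ℝ)) * Mfun m₁ m₂ u - ((4 - (N : ℝ)) + 2) * Lfun u

/-- A ground-state pair: admissible, nonzero, `P_ω = 0`, and `J_ω` attains the
infimum of `J_ω` over nonzero admissible pairs on the Nehari manifold `K_ω = 0`. -/
def IsGroundState {N : ℕ} (m₁ m₂ ω : ℝ) (φ : (Sp N → ℂ) × (Sp N → ℂ)) : Prop :=
  Admissible φ ∧ φ ≠ 0 ∧ Pom m₁ m₂ ω φ = 0 ∧
  Jom m₁ m₂ ω φ =
    sInf {r : ℝ | ∃ w : (Sp N → ℂ) × (Sp N → ℂ),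
      Admissible w ∧ w ≠ 0 ∧ Kom m₁ m₂ ω w = 0 ∧ r = Jom m₁ m₂ ω w}

/-- `𝛙_ω = (iωφ₁, 2iωφ₂)`. -/
def psiOf {N : ℕ} (ω : ℝ) (φ : (Sp N → ℂ) × (Sp N → ℂ)) : (Sp N → ℂ) × (Sp N → ℂ) :=
  (fun x => Complex.I * (ω : ℂ) * φ.1 x, fun x => 2 * (Complex.I * (ω : ℂ)) * φ.2 x)

/-- The scaling `u^λ(x) = λ² u(λx)`, componentwise. -/
def uscale {N : ℕ} (lam : ℝ) (u : (Sp N → ℂ) × (Sp N → ℂ)) : (Sp N → ℂ) × (Sp N → ℂ) :=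
  (fun x => ((lam : ℂ)) ^ 2 * u.1 (lam • x), fun x => ((lam : ℂ)) ^ 2 * u.2 (lam • x))

/-- The scaling `v_λ(x) = λ^{N-2} v(λx)`, componentwise. -/
def vscale {N : ℕ} (lam : ℝ) (v : (Sp N → ℂ) × (Sp N → ℂ)) : (Sp N → ℂ) × (Sp N → ℂ) :=
  (fun x => ((lam ^ ((N : ℝ) - 2) : ℝ) : ℂ) * v.1 (lam • x),
   fun x => ((lam ^ ((N : ℝ) - 2) : ℝ) : ℂ) * v.2 (lam • x))

/-! ### Auxiliary lemmas -/

section Aux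

variable {N : ℕ}

lemma nsq_nonneg (u : Sp N → ℂ) : 0 ≤ nsq u :=
  integral_nonneg fun x => by positivity

lemma gsq_nonneg (u : Sp N → ℂ) : 0 ≤ gsq u :=
  integral_nonneg fun x => by positivity

lemma finrank_sp : Module.finrank ℝ (Sp N) = N := by simp [Sp]

lemma nsq_scale (u : Sp N → ℂ) {lam : ℝ} (hlam : 0 < lam) :
    nsq (fun x => ((lam : ℂ)) ^ 2 * u (lam • x)) = lam ^ 4 * (lam ^ N)⁻¹ * nsq u := by
  unfold nsq
  have h : ∀ x : Sp N, ‖((lam : ℂ)) ^ 2 * u (lam • x)‖ ^ 2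
      = lam ^ 4 * ‖u (lam • x)‖ ^ 2 := by
    intro x
    rw [norm_mul, norm_pow, Complex.norm_real, Real.norm_eq_abs, abs_of_pos hlam]
    ring
  simp_rw [h]
  rw [MeasureTheory.integral_const_mul]
  rw [MeasureTheory.Measure.integral_comp_smul_of_nonneg volume (fun y => ‖u y‖ ^ 2) lam
    (hR := hlam.le)]
  rw [finrank_sp, smul_eq_mul]
  ring

lemma fderiv_scale {u : Sp N → ℂ} (hu : Differentiable ℝ u) (lam : ℝ) (c : ℂ) (x : Sp N) :
    fderiv ℝ (fun y => c * u (lam • y)) x = c • lam • fderiv ℝ u (lam • x) := by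
  have hL : Differentiable ℝ (fun y : Sp N => lam • y) := differentiable_id.const_smul lam
  have h1 : Differentiable ℝ (fun y => u (lam • y)) := hu.comp hL
  rw [fderiv_const_mul (h1 x)]
  congr 1
  have hc : (fun y : Sp N => u (lam • y)) = u ∘ (fun y => lam • y) := rfl
  rw [hc, fderiv_comp x (hu _) (hL x)]
  have h2 : fderiv ℝ (fun y : Sp N => lam • y) x = lam • ContinuousLinearMap.id ℝ (Sp N) := by
    rw [fderiv_fun_const_smul differentiableAt_fun_id lam, fderiv_id']
  rw [h2]
  ext v
  simp [ContinuousLinearMap.map_smul]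

lemma fderiv_scale_normsq {u : Sp N → ℂ} (hu : Differentiable ℝ u) {lam : ℝ}
    (hlam : 0 < lam) (x : Sp N) :
    ‖fderiv ℝ (fun y => ((lam : ℂ)) ^ 2 * u (lam • y)) x‖ ^ 2
      = lam ^ 6 * ‖fderiv ℝ u (lam • x)‖ ^ 2 := by
  rw [fderiv_scale hu lam _ x]
  rw [norm_smul ((lam : ℂ) ^ 2) (lam • fderiv ℝ u (lam • x)),
    norm_smul lam (fderiv ℝ u (lam • x)), norm_pow, Complex.norm_real]
  rw [Real.norm_eq_abs, abs_of_pos hlam]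
  ring

lemma gsq_scale {u : Sp N → ℂ} (hu : Differentiable ℝ u) {lam : ℝ} (hlam : 0 < lam) :
    gsq (fun x => ((lam : ℂ)) ^ 2 * u (lam • x)) = lam ^ 6 * (lam ^ N)⁻¹ * gsq u := by
  unfold gsq
  simp_rw [fderiv_scale_normsq hu hlam]
  rw [MeasureTheory.integral_const_mul,
    MeasureTheory.Measure.integral_comp_smul_of_nonneg volume
      (fun y => ‖fderiv ℝ u y‖ ^ 2) lam (hR := hlam.le)]
  rw [finrank_sp, smul_eq_mul]
  ring

lemma conj_sq_mul (lam : ℝ) (a b : ℂ) :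
    ((lam : ℂ) ^ 2 * a) ^ 2 * starRingEnd ℂ ((lam : ℂ) ^ 2 * b)
      = ((lam ^ 6 : ℝ) : ℂ) * (a ^ 2 * starRingEnd ℂ b) := by
  rw [show ((lam : ℂ)) ^ 2 = ((lam ^ 2 : ℝ) : ℂ) by push_cast; ring]
  rw [map_mul, Complex.conj_ofReal]
  push_cast
  ring

lemma Gfun_uscale (u : (Sp N → ℂ) × (Sp N → ℂ)) {lam : ℝ} (hlam : 0 < lam) :
    Gfun (uscale lam u) = lam ^ 6 * (lam ^ N)⁻¹ * Gfun u := by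
  unfold Gfun uscale
  simp only
  simp_rw [conj_sq_mul lam]
  rw [MeasureTheory.integral_const_mul]
  rw [MeasureTheory.Measure.integral_comp_smul_of_nonneg volume
    (fun y => (u.1 y) ^ 2 * starRingEnd ℂ (u.2 y)) lam (hR := hlam.le)]
  rw [finrank_sp]
  rw [Complex.real_smul, ← mul_assoc, ← Complex.ofReal_mul, Complex.re_ofReal_mul]

lemma Mom_uscale (m₁ m₂ ω : ℝ) (u : (Sp N → ℂ) × (Sp N → ℂ)) {lam : ℝ} (hlam : 0 < lam) :
    Mom m₁ m₂ ω (uscale lam u) = lam ^ 4 * (lam ^ N)⁻¹ * Mom m₁ m₂ ω u := by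
  unfold Mom uscale
  simp only
  rw [nsq_scale u.1 hlam, nsq_scale u.2 hlam]
  ring

lemma Lfun_uscale {u : (Sp N → ℂ) × (Sp N → ℂ)} (h1 : Differentiable ℝ u.1)
    (h2 : Differentiable ℝ u.2) {lam : ℝ} (hlam : 0 < lam) :
    Lfun (uscale lam u) = lam ^ 6 * (lam ^ N)⁻¹ * Lfun u := by
  unfold Lfun
  rw [Gfun_uscale u hlam]
  rw [show (uscale lam u).1 = fun x => ((lam : ℂ)) ^ 2 * u.1 (lam • x) from rfl,
    show (uscale lam u).2 = fun x => ((lam : ℂ)) ^ 2 * u.2 (lam • x) from rfl,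
    gsq_scale h1 hlam, gsq_scale h2 hlam]
  ring

lemma admissible_uscale {u : (Sp N → ℂ) × (Sp N → ℂ)} (h : Admissible u)
    {lam : ℝ} (hlam : 0 < lam) : Admissible (uscale lam u) := by
  obtain ⟨h1, h2, h3, h4, h5, h6, h7⟩ := h
  have hL : Differentiable ℝ (fun y : Sp N => lam • y) := differentiable_id.const_smul lam
  have hd1 : Differentiable ℝ (uscale lam u).1 := (h1.comp hL).const_mul _
  have hd2 : Differentiable ℝ (uscale lam u).2 := (h2.comp hL).const_mul _
  have hns : ∀ (w : Sp N → ℂ), MemLp w 2 volume → Differentiable ℝ w →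
      MemLp (fun x => ((lam : ℂ)) ^ 2 * w (lam • x)) 2 volume := by
    intro w hw hwd
    have hm : AEStronglyMeasurable (fun x : Sp N => ((lam : ℂ)) ^ 2 * w (lam • x)) volume :=
      (continuous_const.mul (hwd.continuous.comp (continuous_id.const_smul lam))).aestronglyMeasurable
    rw [memLp_two_iff_integrable_sq_norm hm]
    have base : Integrable (fun x : Sp N => ‖w x‖ ^ 2) :=
      (memLp_two_iff_integrable_sq_norm hwd.continuous.aestronglyMeasurable).1 hw
    have : Integrable (fun x : Sp N => lam ^ 4 * ‖w (lam • x)‖ ^ 2) :=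
      (base.comp_smul hlam.ne').const_mul _
    refine this.congr (Filter.Eventually.of_forall fun x => ?_)
    show lam ^ 4 * ‖w (lam • x)‖ ^ 2 = ‖((lam : ℂ)) ^ 2 * w (lam • x)‖ ^ 2
    rw [norm_mul, norm_pow, Complex.norm_real, Real.norm_eq_abs, abs_of_pos hlam]
    ring
  refine ⟨hd1, hd2, hns u.1 h3 h1, hns u.2 h4 h2, ?_, ?_, ?_⟩
  · have : Integrable (fun x : Sp N => lam ^ 6 * ‖fderiv ℝ u.1 (lam • x)‖ ^ 2) :=
      (h5.comp_smul hlam.ne').const_mul _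
    exact this.congr (Filter.Eventually.of_forall fun x =>
      (fderiv_scale_normsq h1 hlam x).symm)
  · have : Integrable (fun x : Sp N => lam ^ 6 * ‖fderiv ℝ u.2 (lam • x)‖ ^ 2) :=
      (h6.comp_smul hlam.ne').const_mul _
    exact this.congr (Filter.Eventually.of_forall fun x =>
      (fderiv_scale_normsq h2 hlam x).symm)
  · have : Integrable (fun x : Sp N => lam ^ 6 * (‖u.1 (lam • x)‖ ^ 2 * ‖u.2 (lam • x)‖)) :=
      (h7.comp_smul hlam.ne').const_mul _
    refine this.congr (Filter.Eventually.of_forall fun x => ?_)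
    show lam ^ 6 * (‖u.1 (lam • x)‖ ^ 2 * ‖u.2 (lam • x)‖)
        = ‖((lam : ℂ)) ^ 2 * u.1 (lam • x)‖ ^ 2 * ‖((lam : ℂ)) ^ 2 * u.2 (lam • x)‖
    rw [norm_mul, norm_mul]
    simp only [norm_pow, Complex.norm_real, Real.norm_eq_abs, abs_of_pos hlam]
    ring

lemma Mom_zero (m₁ m₂ ω : ℝ) : Mom m₁ m₂ ω (0 : (Sp N → ℂ) × (Sp N → ℂ)) = 0 := by
  have : nsq (0 : Sp N → ℂ) = 0 := by
    unfold nsq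
    simp
  unfold Mom
  rw [Prod.fst_zero, Prod.snd_zero, this]
  ring

lemma ae_zero_of_nsq_zero {f : Sp N → ℂ} (hf : MemLp f 2 volume) (h : nsq f = 0) :
    f =ᵐ[volume] 0 := by
  have hint : Integrable (fun x : Sp N => ‖f x‖ ^ 2) :=
    (memLp_two_iff_integrable_sq_norm hf.aestronglyMeasurable).1 hf
  have := (integral_eq_zero_iff_of_nonneg (fun x => by positivity) hint).1 h
  filter_upwards [this] with x hx
  simpa using hx

lemma nsq_pos_of_ne {f : Sp N → ℂ} (hc : Continuous f) (hf : MemLp f 2 volume)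
    (hne : f ≠ 0) : 0 < nsq f := by
  rcases lt_or_eq_of_le (nsq_nonneg f) with h | h
  · exact h
  · exfalso
    apply hne
    have := ae_zero_of_nsq_zero hf h.symm
    exact (hc.ae_eq_iff_eq volume continuous_const).1 this

lemma Gfun_zero_of_ae {u : (Sp N → ℂ) × (Sp N → ℂ)} (h2 : u.2 =ᵐ[volume] 0) :
    Gfun u = 0 := by
  unfold Gfun
  have : (fun x => (u.1 x) ^ 2 * starRingEnd ℂ (u.2 x)) =ᵐ[volume] (fun _ => (0 : ℂ)) := by
    filter_upwards [h2] with x hx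
    simp only [Pi.zero_apply] at hx
    simp [hx]
  rw [integral_congr_ae this]
  simp

/-- bound for the cross term in the action -/
lemma re_integral_bound {f g : Sp N → ℂ} (hf : MemLp f 2 volume) (hg : MemLp g 2 volume)
    (hfm : AEStronglyMeasurable f volume) (hgm : AEStronglyMeasurable g volume) (c : ℝ) :
    c * (∫ x, g x * starRingEnd ℂ (Complex.I * f x)).re
      ≤ (1/2) * nsq g + c ^ 2 / 2 * nsq f := by
  have hfint : Integrable (fun x : Sp N => ‖f x‖ ^ 2) :=
    (memLp_two_iff_integrable_sq_norm hfm).1 hf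
  have hgint : Integrable (fun x : Sp N => ‖g x‖ ^ 2) :=
    (memLp_two_iff_integrable_sq_norm hgm).1 hg
  by_cases hI : Integrable (fun x => g x * starRingEnd ℂ (Complex.I * f x)) volume
  · rw [← RCLike.re_eq_complex_re, ← integral_re hI, ← MeasureTheory.integral_const_mul]
    simp only [RCLike.re_eq_complex_re]
    have hle : ∀ x : Sp N, c * (g x * starRingEnd ℂ (Complex.I * f x)).re
        ≤ (1/2) * ‖g x‖ ^ 2 + c ^ 2 / 2 * ‖f x‖ ^ 2 := by
      intro x
      have h1 : |(g x * starRingEnd ℂ (Complex.I * f x)).re|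
          ≤ ‖g x‖ * ‖f x‖ := by
        refine (Complex.abs_re_le_norm _).trans ?_
        rw [norm_mul, RCLike.norm_conj, norm_mul, Complex.norm_I,
          one_mul]
      have h2 : c * (g x * starRingEnd ℂ (Complex.I * f x)).re ≤ |c| * (‖g x‖ * ‖f x‖) := by
        calc c * (g x * starRingEnd ℂ (Complex.I * f x)).re
            ≤ |c * (g x * starRingEnd ℂ (Complex.I * f x)).re| := le_abs_self _
          _ = |c| * |(g x * starRingEnd ℂ (Complex.I * f x)).re| := abs_mul _ _
          _ ≤ |c| * (‖g x‖ * ‖f x‖) := by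
              exact mul_le_mul_of_nonneg_left h1 (abs_nonneg c)
      refine h2.trans ?_
      nlinarith [sq_nonneg (‖g x‖ - |c| * ‖f x‖), _root_.sq_abs c, norm_nonneg (f x),
        norm_nonneg (g x), abs_nonneg c]
    have hrhs : Integrable (fun x : Sp N => (1/2) * ‖g x‖ ^ 2 + c ^ 2 / 2 * ‖f x‖ ^ 2) :=
      (hgint.const_mul _).add (hfint.const_mul _)
    have := integral_mono (hI.re.const_mul c) hrhs hle
    calc ∫ x, c * (g x * starRingEnd ℂ (Complex.I * f x)).re ∂volume
        ≤ ∫ x, ((1/2) * ‖g x‖ ^ 2 + c ^ 2 / 2 * ‖f x‖ ^ 2) ∂volume := this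
      _ = (1/2) * nsq g + c ^ 2 / 2 * nsq f := by
          rw [integral_add (hgint.const_mul _) (hfint.const_mul _),
            MeasureTheory.integral_const_mul, MeasureTheory.integral_const_mul]
          rfl
  · rw [integral_undef hI]
    have := nsq_nonneg f
    have := nsq_nonneg g
    simp only [Complex.zero_re, mul_zero]
    positivity

end Aux
section Aux2

variable {N : ℕ}

lemma J_le_action (m₁ m₂ ω : ℝ) {u v : (Sp N → ℂ) × (Sp N → ℂ)}
    (hu : Admissible u) (hv : SqInt v) :
    Jom m₁ m₂ ω u ≤ Efun m₁ m₂ u v - ω * Qfun u v := by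
  obtain ⟨hd1, hd2, hu1, hu2, -, -, -⟩ := hu
  obtain ⟨hv1, hv2⟩ := hv
  have b1 := re_integral_bound hu1 hv1 hd1.continuous.aestronglyMeasurable
    hv1.aestronglyMeasurable ω
  have b2 := re_integral_bound hu2 hv2 hd2.continuous.aestronglyMeasurable
    hv2.aestronglyMeasurable (2 * ω)
  unfold Jom Efun Kfun Mfun Mom Lfun Qfun
  nlinarith [b1, b2]

lemma key_qid (c : ℝ) (z : ℂ) :
    (Complex.I * (c : ℂ) * z) * starRingEnd ℂ (Complex.I * z) = ((c * ‖z‖ ^ 2 : ℝ) : ℂ) := by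
  rw [map_mul, Complex.conj_I]
  have : Complex.I * (c : ℂ) * z * (-Complex.I * starRingEnd ℂ z)
      = (c : ℂ) * (z * starRingEnd ℂ z) * (Complex.I * -Complex.I) := by ring
  rw [this, Complex.mul_conj]
  rw [show Complex.I * -Complex.I = 1 by rw [mul_neg, Complex.I_mul_I]; ring]
  rw [mul_one]
  rw [show Complex.normSq z = ‖z‖ ^ 2 by rw [Complex.normSq_eq_norm_sq]]
  push_cast
  ring

lemma action_psi (m₁ m₂ ω : ℝ) (φ : (Sp N → ℂ) × (Sp N → ℂ)) :
    Efun m₁ m₂ φ (psiOf ω φ) - ω * Qfun φ (psiOf ω φ) = Jom m₁ m₂ ω φ := by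
  have hn1 : nsq (psiOf ω φ).1 = ω ^ 2 * nsq φ.1 := by
    unfold nsq psiOf
    simp only
    have : ∀ x : Sp N, ‖Complex.I * (ω : ℂ) * φ.1 x‖ ^ 2 = ω ^ 2 * ‖φ.1 x‖ ^ 2 := by
      intro x
      rw [norm_mul, norm_mul, Complex.norm_I, one_mul, Complex.norm_real, Real.norm_eq_abs]
      rw [← sq_abs ω]
      ring
    simp_rw [this]
    rw [MeasureTheory.integral_const_mul]
  have hn2 : nsq (psiOf ω φ).2 = 4 * ω ^ 2 * nsq φ.2 := by
    unfold nsq psiOf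
    simp only
    have hc : ‖(2 : ℂ) * (Complex.I * (ω : ℂ))‖ ^ 2 = 4 * ω ^ 2 := by
      rw [norm_mul, norm_mul, Complex.norm_I, Complex.norm_real, Real.norm_eq_abs,
        show ‖(2 : ℂ)‖ = 2 by norm_num]
      rw [mul_pow, mul_pow, _root_.sq_abs]
      ring
    have : ∀ x : Sp N, ‖2 * (Complex.I * (ω : ℂ)) * φ.2 x‖ ^ 2 = 4 * ω ^ 2 * ‖φ.2 x‖ ^ 2 := by
      intro x
      rw [norm_mul, mul_pow, hc]
    simp_rw [this]
    rw [MeasureTheory.integral_const_mul]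
  have hq : Qfun φ (psiOf ω φ) = ω * nsq φ.1 + 4 * ω * nsq φ.2 := by
    unfold Qfun psiOf nsq
    simp only
    have e1 : ∀ x : Sp N, (Complex.I * (ω : ℂ) * φ.1 x) * starRingEnd ℂ (Complex.I * φ.1 x)
        = ((ω * ‖φ.1 x‖ ^ 2 : ℝ) : ℂ) := fun x => key_qid ω (φ.1 x)
    have e2 : ∀ x : Sp N, (2 * (Complex.I * (ω : ℂ)) * φ.2 x) * starRingEnd ℂ (Complex.I * φ.2 x)
        = ((2 * ω * ‖φ.2 x‖ ^ 2 : ℝ) : ℂ) := by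
      intro x
      have : (2 : ℂ) * (Complex.I * (ω : ℂ)) = Complex.I * ((2 * ω : ℝ) : ℂ) := by
        push_cast; ring
      rw [this]
      exact key_qid (2 * ω) (φ.2 x)
    simp_rw [e1, e2]
    rw [show (∫ x : Sp N, ((ω * ‖φ.1 x‖ ^ 2 : ℝ) : ℂ))
        = ((∫ x : Sp N, ω * ‖φ.1 x‖ ^ 2 : ℝ) : ℂ) from integral_ofReal,
      show (∫ x : Sp N, ((2 * ω * ‖φ.2 x‖ ^ 2 : ℝ) : ℂ))
        = ((∫ x : Sp N, 2 * ω * ‖φ.2 x‖ ^ 2 : ℝ) : ℂ) from integral_ofReal]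
    simp only [Complex.ofReal_re]
    rw [MeasureTheory.integral_const_mul, MeasureTheory.integral_const_mul]
    ring
  unfold Efun Kfun Mfun Jom Mom
  rw [hn1, hn2, hq]
  ring

lemma J_nonneg_of_K0 {m₁ m₂ ω : ℝ} (hm1 : 0 < m₁ ^ 2 - ω ^ 2) (hm2 : 0 < m₂ ^ 2 - 4 * ω ^ 2)
    {u : (Sp N → ℂ) × (Sp N → ℂ)} (hK : Kom m₁ m₂ ω u = 0) : 0 ≤ Jom m₁ m₂ ω u := by
  have h1 := nsq_nonneg u.1
  have h2 := nsq_nonneg u.2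
  have h3 := gsq_nonneg u.1
  have h4 := gsq_nonneg u.2
  unfold Kom at hK
  unfold Jom Mom Lfun at *
  nlinarith [hK, mul_nonneg hm1.le h1, mul_nonneg hm2.le h2]

lemma d_le_J_of_K0 {m₁ m₂ ω : ℝ} (hm1 : 0 < m₁ ^ 2 - ω ^ 2) (hm2 : 0 < m₂ ^ 2 - 4 * ω ^ 2)
    {φ : (Sp N → ℂ) × (Sp N → ℂ)} (hφ : IsGroundState m₁ m₂ ω φ)
    {w : (Sp N → ℂ) × (Sp N → ℂ)} (hadm : Admissible w) (hne : w ≠ 0)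
    (hK : Kom m₁ m₂ ω w = 0) : Jom m₁ m₂ ω φ ≤ Jom m₁ m₂ ω w := by
  rw [hφ.2.2.2]
  refine csInf_le ⟨0, ?_⟩ ⟨w, hadm, hne, hK, rfl⟩
  rintro r ⟨w', hw', -, hK', rfl⟩
  exact J_nonneg_of_K0 hm1 hm2 hK'

end Aux2
section Aux3

variable {N : ℕ}

lemma Gfun_eq_Lfun (u : (Sp N → ℂ) × (Sp N → ℂ)) :
    Gfun u = Lfun u + (gsq u.1 + gsq u.2) / 2 := by
  unfold Lfun; ring

lemma J_ge_d_of_P0 (hN : N = 2 ∨ N = 3) {m₁ m₂ ω : ℝ}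
    (hm1 : 0 < m₁ ^ 2 - ω ^ 2) (hm2 : 0 < m₂ ^ 2 - 4 * ω ^ 2)
    {φ : (Sp N → ℂ) × (Sp N → ℂ)} (hφ : IsGroundState m₁ m₂ ω φ)
    {u : (Sp N → ℂ) × (Sp N → ℂ)} (hu : Admissible u)
    (hM : 0 < Mom m₁ m₂ ω u) (hP : Pom m₁ m₂ ω u = 0) :
    Jom m₁ m₂ ω φ ≤ Jom m₁ m₂ ω u := by
  have hg1 : 0 ≤ gsq u.1 := gsq_nonneg u.1
  have hg2 : 0 ≤ gsq u.2 := gsq_nonneg u.2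
  have hG := Gfun_eq_Lfun u
  unfold Pom at hP
  rcases hN with h | h <;> subst h <;> push_cast at hP
  · -- N = 2
    have hLval : Lfun u = Mom m₁ m₂ ω u / 2 := by linarith
    have hc : 0 < (gsq u.1 + gsq u.2) / 2 + 3 * Lfun u := by
      rw [hLval]; positivity
    set c := (gsq u.1 + gsq u.2) / 2 + 3 * Lfun u with hcdef
    set μ := Real.sqrt (2 * Mom m₁ m₂ ω u / c) with hμdef
    have hμpos : 0 < μ := Real.sqrt_pos.2 (by positivity)
    have hμ2 : μ ^ 2 = 2 * Mom m₁ m₂ ω u / c := Real.sq_sqrt (by positivity)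
    have hμ2' : μ ^ 2 * c = 2 * Mom m₁ m₂ ω u := by
      rw [hμ2]; field_simp
    have hA : μ ^ 4 * (μ ^ 2)⁻¹ = μ ^ 2 := by
      field_simp
    have hB : μ ^ 6 * (μ ^ 2)⁻¹ = μ ^ 4 := by
      field_simp
    have hKw : Kom m₁ m₂ ω (uscale μ u) = 0 := by
      unfold Kom
      rw [Mom_uscale m₁ m₂ ω u hμpos,
        show (uscale μ u).1 = fun x => ((μ : ℂ)) ^ 2 * u.1 (μ • x) from rfl,
        show (uscale μ u).2 = fun x => ((μ : ℂ)) ^ 2 * u.2 (μ • x) from rfl,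
        gsq_scale hu.1 hμpos, gsq_scale hu.2.1 hμpos, Gfun_uscale u hμpos, hA, hB]
      rw [hcdef] at hμ2'
      linear_combination (-(μ ^ 2)) * hμ2' - 3 * μ ^ 4 * hG
    have hMw : 0 < Mom m₁ m₂ ω (uscale μ u) := by
      rw [Mom_uscale m₁ m₂ ω u hμpos, hA]
      positivity
    have hne : uscale μ u ≠ 0 := by
      intro h0
      rw [h0, Mom_zero] at hMw
      exact lt_irrefl 0 hMw
    have step1 : Jom m₁ m₂ ω φ ≤ Jom m₁ m₂ ω (uscale μ u) :=
      d_le_J_of_K0 hm1 hm2 hφ (admissible_uscale hu hμpos) hne hKw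
    have step2 : Jom m₁ m₂ ω (uscale μ u) ≤ Jom m₁ m₂ ω u := by
      unfold Jom
      rw [Mom_uscale m₁ m₂ ω u hμpos, Lfun_uscale hu.1 hu.2.1 hμpos, hA, hB, hLval]
      nlinarith [mul_nonneg hM.le (sq_nonneg (1 - μ ^ 2))]
    linarith
  · -- N = 3
    have hLval : Lfun u = Mom m₁ m₂ ω u / 3 := by linarith
    have hc : 0 < (gsq u.1 + gsq u.2) / 2 + 3 * Lfun u := by
      rw [hLval]; positivity
    set c := (gsq u.1 + gsq u.2) / 2 + 3 * Lfun u with hcdef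
    set μ := Real.sqrt (2 * Mom m₁ m₂ ω u / c) with hμdef
    have hμpos : 0 < μ := Real.sqrt_pos.2 (by positivity)
    have hμ2 : μ ^ 2 = 2 * Mom m₁ m₂ ω u / c := Real.sq_sqrt (by positivity)
    have hμ2' : μ ^ 2 * c = 2 * Mom m₁ m₂ ω u := by
      rw [hμ2]; field_simp
    have hA : μ ^ 4 * (μ ^ 3)⁻¹ = μ := by
      field_simp
    have hB : μ ^ 6 * (μ ^ 3)⁻¹ = μ ^ 3 := by
      field_simp
    have hKw : Kom m₁ m₂ ω (uscale μ u) = 0 := by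
      unfold Kom
      rw [Mom_uscale m₁ m₂ ω u hμpos,
        show (uscale μ u).1 = fun x => ((μ : ℂ)) ^ 2 * u.1 (μ • x) from rfl,
        show (uscale μ u).2 = fun x => ((μ : ℂ)) ^ 2 * u.2 (μ • x) from rfl,
        gsq_scale hu.1 hμpos, gsq_scale hu.2.1 hμpos, Gfun_uscale u hμpos, hA, hB]
      rw [hcdef] at hμ2'
      linear_combination (-μ) * hμ2' - 3 * μ ^ 3 * hG
    have hMw : 0 < Mom m₁ m₂ ω (uscale μ u) := by
      rw [Mom_uscale m₁ m₂ ω u hμpos, hA]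
      positivity
    have hne : uscale μ u ≠ 0 := by
      intro h0
      rw [h0, Mom_zero] at hMw
      exact lt_irrefl 0 hMw
    have step1 : Jom m₁ m₂ ω φ ≤ Jom m₁ m₂ ω (uscale μ u) :=
      d_le_J_of_K0 hm1 hm2 hφ (admissible_uscale hu hμpos) hne hKw
    have step2 : Jom m₁ m₂ ω (uscale μ u) ≤ Jom m₁ m₂ ω u := by
      unfold Jom
      rw [Mom_uscale m₁ m₂ ω u hμpos, Lfun_uscale hu.1 hu.2.1 hμpos, hA, hB, hLval]
      nlinarith [mul_nonneg (mul_nonneg hM.le (sq_nonneg (μ - 1))) (by linarith : (0:ℝ) ≤ μ + 2)]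
    linarith

lemma Mom_nonneg {m₁ m₂ ω : ℝ} (hm1 : 0 < m₁ ^ 2 - ω ^ 2) (hm2 : 0 < m₂ ^ 2 - 4 * ω ^ 2)
    (u : (Sp N → ℂ) × (Sp N → ℂ)) : 0 ≤ Mom m₁ m₂ ω u := by
  unfold Mom
  have h1 := nsq_nonneg u.1
  have h2 := nsq_nonneg u.2
  nlinarith

lemma M_bound (hN : N = 2 ∨ N = 3) {m₁ m₂ ω : ℝ}
    (hm1 : 0 < m₁ ^ 2 - ω ^ 2) (hm2 : 0 < m₂ ^ 2 - 4 * ω ^ 2)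
    {φ : (Sp N → ℂ) × (Sp N → ℂ)} (hφ : IsGroundState m₁ m₂ ω φ)
    {u : (Sp N → ℂ) × (Sp N → ℂ)} (hu : Admissible u)
    (hP : Pom m₁ m₂ ω u < 0) :
    (6 - (N : ℝ)) * Jom m₁ m₂ ω φ < 2 * Mom m₁ m₂ ω u := by
  have hg1 : 0 ≤ gsq u.1 := gsq_nonneg u.1
  have hg2 : 0 ≤ gsq u.2 := gsq_nonneg u.2
  have hM0 : 0 ≤ Mom m₁ m₂ ω u := Mom_nonneg hm1 hm2 u
  have hN46 : (0:ℝ) ≤ 4 - (N : ℝ) ∧ (0:ℝ) < 6 - (N : ℝ) := by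
    rcases hN with h | h <;> subst h <;> norm_num
  -- M > 0
  have hMpos : 0 < Mom m₁ m₂ ω u := by
    rcases lt_or_eq_of_le hM0 with h | h
    · exact h
    · exfalso
      have h1 := nsq_nonneg u.1
      have h2 := nsq_nonneg u.2
      have hn2 : nsq u.2 = 0 := by
        unfold Mom at h
        nlinarith
      have hG0 : Gfun u = 0 :=
        Gfun_zero_of_ae (ae_zero_of_nsq_zero hu.2.2.2.1 hn2)
      have hL0 : Lfun u ≤ 0 := by
        unfold Lfun
        rw [hG0]
        linarith
      unfold Pom at hP
      rw [← h] at hP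
      nlinarith [hN46.1, hN46.2]
  have hLpos : 0 < Lfun u := by
    unfold Pom at hP
    nlinarith [hN46.1, hN46.2, mul_nonneg hN46.1 hM0]
  unfold Pom at hP
  rcases hN with h | h <;> subst h <;> push_cast at hP ⊢
  · -- N = 2
    set lam := Real.sqrt (Mom m₁ m₂ ω u / (2 * Lfun u)) with hlamdef
    have hlampos : 0 < lam := Real.sqrt_pos.2 (by positivity)
    have hlam2 : lam ^ 2 = Mom m₁ m₂ ω u / (2 * Lfun u) := Real.sq_sqrt (by positivity)
    have hlam2' : lam ^ 2 * (2 * Lfun u) = Mom m₁ m₂ ω u := by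
      rw [hlam2]; field_simp
    have hlamlt : lam ^ 2 < 1 := by
      rw [hlam2, div_lt_one (by positivity)]
      linarith
    have hA : lam ^ 4 * (lam ^ 2)⁻¹ = lam ^ 2 := by field_simp
    have hB : lam ^ 6 * (lam ^ 2)⁻¹ = lam ^ 4 := by field_simp
    have hPw : Pom m₁ m₂ ω (uscale lam u) = 0 := by
      unfold Pom
      rw [Mom_uscale m₁ m₂ ω u hlampos, Lfun_uscale hu.1 hu.2.1 hlampos, hA, hB]
      push_cast
      linear_combination (-2 * lam ^ 2) * hlam2'
    have hMw : 0 < Mom m₁ m₂ ω (uscale lam u) := by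
      rw [Mom_uscale m₁ m₂ ω u hlampos, hA]; positivity
    have hstep : Jom m₁ m₂ ω φ ≤ Jom m₁ m₂ ω (uscale lam u) :=
      J_ge_d_of_P0 (Or.inl rfl) hm1 hm2 hφ (admissible_uscale hu hlampos) hMw hPw
    have hval : Jom m₁ m₂ ω (uscale lam u) < Mom m₁ m₂ ω u / 2 := by
      unfold Jom
      rw [Mom_uscale m₁ m₂ ω u hlampos, Lfun_uscale hu.1 hu.2.1 hlampos, hA, hB]
      nlinarith [hlam2', hMpos, hlamlt, hlampos, sq_nonneg lam]
    linarith
  · -- N = 3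
    set lam := Real.sqrt (Mom m₁ m₂ ω u / (3 * Lfun u)) with hlamdef
    have hlampos : 0 < lam := Real.sqrt_pos.2 (by positivity)
    have hlam2 : lam ^ 2 = Mom m₁ m₂ ω u / (3 * Lfun u) := Real.sq_sqrt (by positivity)
    have hlam2' : lam ^ 2 * (3 * Lfun u) = Mom m₁ m₂ ω u := by
      rw [hlam2]; field_simp
    have hlamlt2 : lam ^ 2 < 1 := by
      rw [hlam2, div_lt_one (by positivity)]
      linarith
    have hlamlt : lam < 1 := by nlinarith
    have hA : lam ^ 4 * (lam ^ 3)⁻¹ = lam := by field_simp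
    have hB : lam ^ 6 * (lam ^ 3)⁻¹ = lam ^ 3 := by field_simp
    have hPw : Pom m₁ m₂ ω (uscale lam u) = 0 := by
      unfold Pom
      rw [Mom_uscale m₁ m₂ ω u hlampos, Lfun_uscale hu.1 hu.2.1 hlampos, hA, hB]
      push_cast
      linear_combination (-lam) * hlam2'
    have hMw : 0 < Mom m₁ m₂ ω (uscale lam u) := by
      rw [Mom_uscale m₁ m₂ ω u hlampos, hA]; positivity
    have hstep : Jom m₁ m₂ ω φ ≤ Jom m₁ m₂ ω (uscale lam u) :=
      J_ge_d_of_P0 (Or.inr rfl) hm1 hm2 hφ (admissible_uscale hu hlampos) hMw hPw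
    have hval : Jom m₁ m₂ ω (uscale lam u) < 2 * Mom m₁ m₂ ω u / 3 := by
      unfold Jom
      rw [Mom_uscale m₁ m₂ ω u hlampos, Lfun_uscale hu.1 hu.2.1 hlampos, hA, hB]
      nlinarith [hlam2', hMpos, hlamlt, hlampos]
    linarith

lemma d_pos (hN : N = 2 ∨ N = 3) {m₁ m₂ ω : ℝ}
    (hm1 : 0 < m₁ ^ 2 - ω ^ 2) (hm2 : 0 < m₂ ^ 2 - 4 * ω ^ 2)
    {φ : (Sp N → ℂ) × (Sp N → ℂ)} (hφ : IsGroundState m₁ m₂ ω φ) :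
    0 < Jom m₁ m₂ ω φ := by
  obtain ⟨hadm, hne, hP, -⟩ := hφ
  have h1 := nsq_nonneg φ.1
  have h2 := nsq_nonneg φ.2
  have hMpos : 0 < Mom m₁ m₂ ω φ := by
    have hor : 0 < nsq φ.1 ∨ 0 < nsq φ.2 := by
      by_contra hcon
      push_neg at hcon
      apply hne
      have e1 : φ.1 = 0 := by
        by_contra hne1
        exact absurd (nsq_pos_of_ne hadm.1.continuous hadm.2.2.1 hne1) (by linarith [hcon.1])
      have e2 : φ.2 = 0 := by
        by_contra hne2
        exact absurd (nsq_pos_of_ne hadm.2.1.continuous hadm.2.2.2.1 hne2) (by linarith [hcon.2])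
      exact Prod.ext e1 e2
    unfold Mom
    rcases hor with h | h
    · nlinarith
    · nlinarith
  unfold Pom at hP
  unfold Jom
  rcases hN with h | h <;> subst h <;> push_cast at hP ⊢ <;> linarith

end Aux3

/-- Invariance of the set `𝓐_ω`: if the action `S_ω = E - ωQ` is conserved,
smaller than `S_ω(𝛗_ω,𝛙_ω)` initially, and `P_ω(𝐮(0)) < 0`, then
`P_ω(𝐮(t)) < 0` on `[0,T)`. -/
theorem stmt_3 {N : ℕ} (hN : N = 2 ∨ N = 3) (m₁ m₂ ω : ℝ)
    (hm₁ : 0 < m₁) (hm₂ : 0 < m₂) (hω : ω ^ 2 < min (m₁ ^ 2) (m₂ ^ 2 / 4))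
    (φ : (Sp N → ℂ) × (Sp N → ℂ)) (hφ : IsGroundState m₁ m₂ ω φ)
    (T : ℝ≥0∞) (hT : 0 < T)
    (u v : ℝ → (Sp N → ℂ) × (Sp N → ℂ))
    (hadm : ∀ t : ℝ, 0 ≤ t → ENNReal.ofReal t < T → Admissible (u t))
    (hsq : ∀ t : ℝ, 0 ≤ t → ENNReal.ofReal t < T → SqInt (v t))
    (hcontP : ContinuousOn (fun t => Pom m₁ m₂ ω (u t))
      {t : ℝ | 0 ≤ t ∧ ENNReal.ofReal t < T})
    (hcontM : ContinuousOn (fun t => Mom m₁ m₂ ω (u t))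
      {t : ℝ | 0 ≤ t ∧ ENNReal.ofReal t < T})
    (hcons : ∀ t : ℝ, 0 ≤ t → ENNReal.ofReal t < T →
      Efun m₁ m₂ (u t) (v t) - ω * Qfun (u t) (v t)
        = Efun m₁ m₂ (u 0) (v 0) - ω * Qfun (u 0) (v 0))
    (hS : Efun m₁ m₂ (u 0) (v 0) - ω * Qfun (u 0) (v 0)
        < Efun m₁ m₂ φ (psiOf ω φ) - ω * Qfun φ (psiOf ω φ))
    (hP0 : Pom m₁ m₂ ω (u 0) < 0) :
    ∀ t : ℝ, 0 ≤ t → ENNReal.ofReal t < T → Pom m₁ m₂ ω (u t) < 0 := by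
  have hm1 : 0 < m₁ ^ 2 - ω ^ 2 := by
    have := (lt_min_iff.mp hω).1; linarith
  have hm2 : 0 < m₂ ^ 2 - 4 * ω ^ 2 := by
    have := (lt_min_iff.mp hω).2; linarith
  have hdpos : 0 < Jom m₁ m₂ ω φ := d_pos hN hm1 hm2 hφ
  have h6N : (3:ℝ) ≤ 6 - (N : ℝ) := by
    rcases hN with h | h <;> subst h <;> push_cast <;> norm_num
  have hS0 : Efun m₁ m₂ (u 0) (v 0) - ω * Qfun (u 0) (v 0) < Jom m₁ m₂ ω φ := by
    have := action_psi m₁ m₂ ω φ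
    linarith
  intro t ht htT
  by_contra hcon
  push_neg at hcon
  have hIccD : Set.Icc (0:ℝ) t ⊆ {r : ℝ | 0 ≤ r ∧ ENNReal.ofReal r < T} := fun r hr =>
    ⟨hr.1, lt_of_le_of_lt (ENNReal.ofReal_le_ofReal hr.2) htT⟩
  set C := {r : ℝ | r ∈ Set.Icc (0:ℝ) t ∧ 0 ≤ Pom m₁ m₂ ω (u r)} with hCdef
  have hCc : IsClosed C := by
    have he : C = Set.Icc 0 t ∩ (fun r => Pom m₁ m₂ ω (u r)) ⁻¹' Set.Ici 0 := rfl
    rw [he]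
    exact (hcontP.mono hIccD).preimage_isClosed_of_isClosed isClosed_Icc isClosed_Ici
  have hCne : C.Nonempty := ⟨t, ⟨⟨ht, le_refl t⟩, hcon⟩⟩
  have hCbdd : BddBelow C := ⟨0, fun r hr => hr.1.1⟩
  set s := sInf C with hsdef
  have hsC : s ∈ C := hCc.csInf_mem hCne hCbdd
  have hs0 : 0 ≤ s := hsC.1.1
  have hst : s ≤ t := hsC.1.2
  have hsD : 0 ≤ s ∧ ENNReal.ofReal s < T := hIccD hsC.1
  have hspos : 0 < s := by
    rcases lt_or_eq_of_le hs0 with h | h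
    · exact h
    · exfalso
      rw [← h] at hsC
      exact absurd hsC.2 (not_le.2 hP0)
  have hneg : ∀ r, 0 ≤ r → r < s → Pom m₁ m₂ ω (u r) < 0 := by
    intro r h0r hrs
    by_contra hcon2
    push_neg at hcon2
    have hrC : r ∈ C := ⟨⟨h0r, le_trans hrs.le hst⟩, hcon2⟩
    have := csInf_le hCbdd hrC
    rw [← hsdef] at this
    linarith
  have hMlow : ∀ r, 0 ≤ r → r < s →
      (6 - (N:ℝ)) * Jom m₁ m₂ ω φ ≤ 2 * Mom m₁ m₂ ω (u r) := by
    intro r h0 hr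
    have hrD : 0 ≤ r ∧ ENNReal.ofReal r < T := hIccD ⟨h0, le_trans hr.le hst⟩
    exact (M_bound hN hm1 hm2 hφ (hadm r hrD.1 hrD.2) (hneg r h0 hr)).le
  haveI hNB : (nhdsWithin s (Set.Ico 0 s)).NeBot := by
    apply mem_closure_iff_nhdsWithin_neBot.1
    rw [closure_Ico hspos.ne]
    exact ⟨hspos.le, le_refl s⟩
  have hsub : Set.Ico (0:ℝ) s ⊆ Set.Icc 0 t := fun r hr => ⟨hr.1, le_trans hr.2.le hst⟩
  have hMcont : ContinuousWithinAt (fun r => Mom m₁ m₂ ω (u r)) (Set.Ico 0 s) s :=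
    ((hcontM.mono hIccD).continuousWithinAt hsC.1).mono hsub
  have hPcont : ContinuousWithinAt (fun r => Pom m₁ m₂ ω (u r)) (Set.Ico 0 s) s :=
    ((hcontP.mono hIccD).continuousWithinAt hsC.1).mono hsub
  have hMs : (6 - (N:ℝ)) * Jom m₁ m₂ ω φ ≤ 2 * Mom m₁ m₂ ω (u s) := by
    have hev : ∀ᶠ r in nhdsWithin s (Set.Ico 0 s),
        (6 - (N:ℝ)) * Jom m₁ m₂ ω φ ≤ 2 * Mom m₁ m₂ ω (u r) :=
      eventually_nhdsWithin_of_forall (fun r hr => hMlow r hr.1 hr.2)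
    exact ge_of_tendsto (hMcont.const_mul 2) hev
  have hPs0 : Pom m₁ m₂ ω (u s) ≤ 0 := by
    have hev : ∀ᶠ r in nhdsWithin s (Set.Ico 0 s), Pom m₁ m₂ ω (u r) ≤ 0 :=
      eventually_nhdsWithin_of_forall (fun r hr => (hneg r hr.1 hr.2).le)
    exact le_of_tendsto hPcont hev
  have hPs : Pom m₁ m₂ ω (u s) = 0 := le_antisymm hPs0 hsC.2
  have hMspos : 0 < Mom m₁ m₂ ω (u s) := by nlinarith
  have h1 : Jom m₁ m₂ ω φ ≤ Jom m₁ m₂ ω (u s) :=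
    J_ge_d_of_P0 hN hm1 hm2 hφ (hadm s hsD.1 hsD.2) hMspos hPs
  have h2 : Jom m₁ m₂ ω (u s) ≤ Efun m₁ m₂ (u s) (v s) - ω * Qfun (u s) (v s) :=
    J_le_action m₁ m₂ ω (hadm s hsD.1 hsD.2) (hsq s hsD.1 hsD.2)
  have h3 := hcons s hsD.1 hsD.2
  linarith

end
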